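/- arXiv:1003.3528 — 3 statements merged into one kernel-verified Lean document; each statement's English description precedes it below -/
import Mathlib

section
/- Let I, J be disjoint nonempty subsets of {1,...,m}. The cone generated by the vectors e_k + e_j (k ∈ I, j ∈ J) together with 2e_l (l ∉ I ∪ J) equals the intersection of the nonnegative orthant {x ∈ Q^m : x_i ≥ 0} with the hyperplane Σ_{i∈I} x_i = Σ_{j∈J} x_j, and this cone has dimension m − 1. -/
/-!
Every generator `e_k + e_j` (`k ∈ I`, `j ∈ J`) and `2 e_l` (`l ∉ I ∪ J`) is a nonnegative
balanced vector, so the generated cone lies in the balanced cone. Conversely, if `x ≥ 0` has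
common mass `S = ∑_{i∈I} x_i = ∑_{j∈J} x_j`, the product coupling `c (a, b) = x_a x_b / S` of
`x|_I` and `x|_J`, together with `d l = x_l / 2`, expresses `x` through the generators.

The balanced cone is the nonnegative part of the hyperplane `ker (∑_I x_i - ∑_J x_j)` and contains
a vector with all coordinates positive, so it spans that hyperplane, which has codimension one.
-/

open Finset

section Coordinates

variable {ι R : Type*} [Fintype ι] [DecidableEq ι] [Semiring R]

lemma sum_smul_single_add_single_apply (c : ι × ι → R) (t : ι) :
    (∑ p : ι × ι, c p • (Pi.single p.1 (1 : R) + Pi.single p.2 (1 : R)) : ι → R) t =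
      ∑ b, c (t, b) + ∑ a, c (a, t) := by
  simp only [Finset.sum_apply, Pi.add_apply, smul_add, sum_add_distrib]
  rw [Fintype.sum_prod_type, Fintype.sum_prod_type_right]
  simp [Pi.single_apply, eq_comm (a := t)]

lemma sum_smul_two_nsmul_single_apply (d : ι → R) (t : ι) :
    (∑ l, d l • (2 • Pi.single l (1 : R)) : ι → R) t = d t * 2 := by
  simp [Finset.sum_apply, Pi.single_apply]

end Coordinates

lemma mul_sum_div_sum_of_mem {ι K : Type*} [Field K] [LinearOrder K] [IsStrictOrderedRing K]
    {s : Finset ι} {x : ι → K} (hx : ∀ i ∈ s, 0 ≤ x i) {t : ι} (ht : t ∈ s) :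
    x t * (∑ i ∈ s, x i) / ∑ i ∈ s, x i = x t := by
  rcases eq_or_ne (∑ i ∈ s, x i) 0 with h | h
  · simp [h, (sum_eq_zero_iff_of_nonneg hx).mp h t ht]
  · exact mul_div_cancel_right₀ _ h

lemma span_positive_inf_ker {ι K : Type*} [Fintype ι] [Field K] [LinearOrder K]
    [IsStrictOrderedRing K] (f : Module.Dual K (ι → K)) {w : ι → K} (hw : ∀ i, 0 < w i)
    (hfw : f w = 0) :
    Submodule.span K ((PointedCone.positive K (ι → K) ⊓
      PointedCone.ofSubmodule (LinearMap.ker f) : PointedCone K (ι → K)) : Set (ι → K)) =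
      LinearMap.ker f := by
  refine le_antisymm (Submodule.span_le.2 fun x hx => hx.2) fun x hx => ?_
  set C : PointedCone K (ι → K) :=
    PointedCone.positive K (ι → K) ⊓ PointedCone.ofSubmodule (LinearMap.ker f)
  set M := ∑ i, |x i| / w i
  have hM : 0 ≤ M := sum_nonneg fun i _ => div_nonneg (abs_nonneg _) (hw i).le
  have hMw : M • w ∈ C := ⟨fun i => mul_nonneg hM (hw i).le, by simp [hfw]⟩
  have hxMw : x + M • w ∈ C := by
    refine ⟨fun i => ?_, by simp_all⟩
    have : |x i| ≤ M * w i := by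
      rw [← div_le_iff₀ (hw i)]
      exact single_le_sum (f := fun i => |x i| / w i)
        (fun i _ => div_nonneg (abs_nonneg _) (hw i).le) (mem_univ i)
    simp only [Pi.zero_apply, Pi.add_apply, Pi.smul_apply, smul_eq_mul]
    linarith [neg_abs_le (x i)]
  simpa using Submodule.sub_mem _ (Submodule.subset_span hxMw) (Submodule.subset_span hMw)

section Imbalance

variable {ι R : Type*} [CommRing R]

def imbalance (I J : Finset ι) : Module.Dual R (ι → R) :=
  ∑ i ∈ I, LinearMap.proj i - ∑ j ∈ J, LinearMap.proj j

@[simp]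
lemma imbalance_apply (I J : Finset ι) (x : ι → R) :
    imbalance I J x = ∑ i ∈ I, x i - ∑ j ∈ J, x j := by
  simp [imbalance, LinearMap.sum_apply]

lemma imbalance_ne_zero [DecidableEq ι] [Nontrivial R] {I J : Finset ι} (hIJ : Disjoint I J)
    (hI : I.Nonempty) : imbalance (R := R) I J ≠ 0 := by
  obtain ⟨i, hi⟩ := hI
  intro h
  simpa [sum_pi_single', hi, disjoint_left.mp hIJ hi] using
    LinearMap.congr_fun h (Pi.single i 1)

end Imbalance

section BalancedCone

variable {ι K : Type*} [Field K] [LinearOrder K] [IsStrictOrderedRing K]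

def balancedCone (I J : Finset ι) : PointedCone K (ι → K) :=
  PointedCone.positive K (ι → K) ⊓ PointedCone.ofSubmodule (LinearMap.ker (imbalance I J))

variable {I J : Finset ι}

lemma mem_balancedCone {x : ι → K} :
    x ∈ balancedCone I J ↔ 0 ≤ x ∧ ∑ i ∈ I, x i = ∑ j ∈ J, x j := by
  simp [balancedCone, sub_eq_zero]

lemma coe_balancedCone : (balancedCone (K := K) I J : Set (ι → K)) =
    {x : ι → K | (∀ i, 0 ≤ x i) ∧ ∑ i ∈ I, x i = ∑ j ∈ J, x j} := by
  ext x
  simp [mem_balancedCone, Pi.le_def]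

variable [DecidableEq ι]

lemma single_add_single_mem_balancedCone (hIJ : Disjoint I J) {a b : ι} (ha : a ∈ I)
    (hb : b ∈ J) : Pi.single a 1 + Pi.single b 1 ∈ balancedCone (K := K) I J := by
  refine mem_balancedCone.2 ⟨add_nonneg (Pi.single_nonneg.2 zero_le_one)
    (Pi.single_nonneg.2 zero_le_one), ?_⟩
  simp [sum_add_distrib, sum_pi_single', ha, hb, disjoint_left.mp hIJ ha,
    disjoint_right.mp hIJ hb]

lemma single_mem_balancedCone {l : ι} (hl : l ∉ I ∪ J) :
    Pi.single l 1 ∈ balancedCone (K := K) I J := by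
  rw [mem_union, not_or] at hl
  refine mem_balancedCone.2 ⟨Pi.single_nonneg.2 zero_le_one, ?_⟩
  simp [sum_pi_single', hl.1, hl.2]

lemma mem_balancedCone_of_eq_sum [Fintype ι] (hIJ : Disjoint I J)
    (c : ι × ι → K) (d : ι → K) (hc : ∀ p, 0 ≤ c p) (hd : ∀ l, 0 ≤ d l)
    (hcI : ∀ p : ι × ι, ¬(p.1 ∈ I ∧ p.2 ∈ J) → c p = 0) (hdI : ∀ l, l ∈ I ∪ J → d l = 0) :
    (∑ p : ι × ι, c p • (Pi.single p.1 (1 : K) + Pi.single p.2 (1 : K)))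
      + ∑ l : ι, d l • (2 • Pi.single l (1 : K)) ∈ balancedCone I J := by
  refine add_mem (sum_mem fun p _ => ?_) (sum_mem fun l _ => ?_)
  · by_cases hp : p.1 ∈ I ∧ p.2 ∈ J
    · exact (balancedCone I J).smul_mem (hc p) (single_add_single_mem_balancedCone hIJ hp.1 hp.2)
    · simp [hcI p hp]
  · by_cases hl : l ∈ I ∪ J
    · simp [hdI l hl]
    · exact (balancedCone I J).smul_mem (hd l) (nsmul_mem (single_mem_balancedCone hl) 2)

lemma exists_eq_sum_of_mem_balancedCone [Fintype ι] (hIJ : Disjoint I J) {x : ι → K}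
    (hx : x ∈ balancedCone I J) :
    ∃ (c : ι × ι → K) (d : ι → K), (∀ p, 0 ≤ c p) ∧ (∀ l, 0 ≤ d l) ∧
      (∀ p : ι × ι, ¬(p.1 ∈ I ∧ p.2 ∈ J) → c p = 0) ∧ (∀ l, l ∈ I ∪ J → d l = 0) ∧
      x = (∑ p : ι × ι, c p • (Pi.single p.1 (1 : K) + Pi.single p.2 (1 : K)))
        + ∑ l : ι, d l • (2 • Pi.single l (1 : K)) := by
  obtain ⟨hx0, hbal⟩ := mem_balancedCone.1 hx
  refine ⟨fun p => if p.1 ∈ I ∧ p.2 ∈ J then x p.1 * x p.2 / ∑ i ∈ I, x i else 0,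
    fun l => if l ∈ I ∪ J then 0 else x l / 2,
    fun p => ite_nonneg (div_nonneg (mul_nonneg (hx0 _) (hx0 _)) (sum_nonneg fun i _ => hx0 i))
      le_rfl,
    fun l => ite_nonneg le_rfl (div_nonneg (hx0 l) zero_le_two),
    fun p hp => if_neg hp, fun l hl => if_pos hl, funext fun t => ?_⟩
  rw [Pi.add_apply, sum_smul_single_add_single_apply, sum_smul_two_nsmul_single_apply]
  by_cases htI : t ∈ I
  · have htJ : t ∉ J := disjoint_left.mp hIJ htI
    simp only [htI, htJ, true_and, and_false, sum_ite_mem, univ_inter, ↓reduceIte,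
      sum_const_zero, add_zero, mem_union, or_false, zero_mul]
    rw [← sum_div, ← mul_sum, ← hbal]
    exact (mul_sum_div_sum_of_mem (fun i _ => hx0 i) htI).symm
  by_cases htJ : t ∈ J
  · simp only [htI, htJ, false_and, and_true, sum_ite_mem, univ_inter, ↓reduceIte,
      sum_const_zero, zero_add, add_zero, mem_union, or_true, zero_mul]
    rw [← sum_div, ← sum_mul, hbal, mul_comm]
    exact (mul_sum_div_sum_of_mem (fun j _ => hx0 j) htJ).symm
  · simp [htI, htJ]

lemma setOf_eq_sum_eq_balancedCone [Fintype ι] (hIJ : Disjoint I J) :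
    {x : ι → K | ∃ (c : ι × ι → K) (d : ι → K), (∀ p, 0 ≤ c p) ∧ (∀ l, 0 ≤ d l) ∧
      (∀ p : ι × ι, ¬(p.1 ∈ I ∧ p.2 ∈ J) → c p = 0) ∧ (∀ l, l ∈ I ∪ J → d l = 0) ∧
      x = (∑ p : ι × ι, c p • (Pi.single p.1 (1 : K) + Pi.single p.2 (1 : K)))
        + ∑ l : ι, d l • (2 • Pi.single l (1 : K))} =
      (balancedCone (K := K) I J : Set (ι → K)) := by
  ext x
  refine ⟨?_, exists_eq_sum_of_mem_balancedCone hIJ⟩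
  rintro ⟨c, d, hc, hd, hcI, hdI, rfl⟩
  exact mem_balancedCone_of_eq_sum hIJ c d hc hd hcI hdI

variable [Fintype ι]

lemma span_balancedCone (hIJ : Disjoint I J) (hI : I.Nonempty) (hJ : J.Nonempty) :
    Submodule.span K (balancedCone (K := K) I J : Set (ι → K)) =
      LinearMap.ker (imbalance I J) := by
  refine span_positive_inf_ker _
    (w := fun t => if t ∈ I then (#J : K) else if t ∈ J then (#I : K) else 1) (fun t => ?_) ?_
  · split_ifs <;> simp [hI.card_pos, hJ.card_pos]
  · have : ∀ t ∈ J, t ∉ I := fun t ht => disjoint_right.mp hIJ ht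
    simp [sum_ite_of_true, sum_ite_of_false this, mul_comm]

lemma finrank_span_balancedCone (hIJ : Disjoint I J) (hI : I.Nonempty) (hJ : J.Nonempty) :
    Module.finrank K (Submodule.span K (balancedCone (K := K) I J : Set (ι → K))) + 1 =
      Fintype.card ι := by
  rw [span_balancedCone hIJ hI hJ, Module.Dual.finrank_ker_add_one_of_ne_zero
    (imbalance_ne_zero hIJ hI), Module.finrank_fintype_fun_eq_card]

end BalancedCone

/-- For disjoint nonempty `I, J ⊆ {1, ..., m}`, the cone generated by the vectors
`e_k + e_j` (`k ∈ I`, `j ∈ J`) and `2 e_l` (`l ∉ I ∪ J`) equals the intersection of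
the nonnegative orthant of `ℚ^m` with the hyperplane `∑_{i∈I} xᵢ = ∑_{j∈J} xⱼ`,
and this cone has dimension `m - 1`. -/
theorem stmt_9 {m : ℕ} (I J : Finset (Fin m)) (hI : I.Nonempty) (hJ : J.Nonempty)
    (hIJ : Disjoint I J) :
    {x : Fin m → ℚ | ∃ (c : Fin m × Fin m → ℚ) (d : Fin m → ℚ),
        (∀ p, 0 ≤ c p) ∧ (∀ l, 0 ≤ d l) ∧
        (∀ p : Fin m × Fin m, ¬(p.1 ∈ I ∧ p.2 ∈ J) → c p = 0) ∧
        (∀ l, l ∈ I ∪ J → d l = 0) ∧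
        x = (∑ p : Fin m × Fin m, c p • (Pi.single p.1 (1 : ℚ) + Pi.single p.2 (1 : ℚ)))
            + ∑ l : Fin m, d l • (2 • Pi.single l (1 : ℚ))} =
      {x : Fin m → ℚ | (∀ i, 0 ≤ x i) ∧ ∑ i ∈ I, x i = ∑ j ∈ J, x j} ∧
    Module.finrank ℚ (Submodule.span ℚ
      {x : Fin m → ℚ | (∀ i, 0 ≤ x i) ∧ ∑ i ∈ I, x i = ∑ j ∈ J, x j}) = m - 1 := by
  rw [← coe_balancedCone]
  refine ⟨setOf_eq_sum_eq_balancedCone hIJ, ?_⟩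
  have hrank := finrank_span_balancedCone (K := ℚ) hIJ hI hJ
  rw [Fintype.card_fin] at hrank
  omega
end

section
/- For the diagonal action of SO_3 on (C^3)^3, the GIT-fan obtained by cutting the cone Ω = {x ∈ Q^3 : x_1,x_2,x_3 ≥ 0} by the six hyperplanes x_1 = x_2, x_1 = x_3, x_2 = x_3, x_1 + x_2 = x_3, x_1 + x_3 = x_2, x_2 + x_3 = x_1 has exactly 12 three-dimensional chambers, 21 two-dimensional cones, and 10 one-dimensional cones (33 GIT-equivalence classes in total, counting relative interiors). -/
namespace Stmt10

/-- The six linear functionals cutting the octant: `x₁-x₂, x₁-x₃, x₂-x₃,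
x₁+x₂-x₃, x₁+x₃-x₂, x₂+x₃-x₁`. -/
def ℓ : Fin 6 → (Fin 3 → ℚ) → ℚ :=
  ![fun x => x 0 - x 1, fun x => x 0 - x 2, fun x => x 1 - x 2,
    fun x => x 0 + x 1 - x 2, fun x => x 0 + x 2 - x 1, fun x => x 1 + x 2 - x 0]

/-- The sign of a rational number. -/
def sgn (q : ℚ) : ℤ := if q < 0 then -1 else if q = 0 then 0 else 1

/-- The sign pattern of a point: signs of the six functionals and of the three
coordinates. -/
def pattern (x : Fin 3 → ℚ) : (Fin 6 → ℤ) × (Fin 3 → ℤ) :=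
  (fun k => sgn (ℓ k x), fun i => sgn (x i))

/-- The (relatively open) cell of the subdivision of the octant corresponding to a
sign pattern `p`: nonzero points of the octant realizing `p`. -/
def cell (p : (Fin 6 → ℤ) × (Fin 3 → ℤ)) : Set (Fin 3 → ℚ) :=
  {x | (∀ i, 0 ≤ x i) ∧ x ≠ 0 ∧ pattern x = p}

/-- The dimension of a cell: the dimension of its linear span. -/
noncomputable def dimOf (C : Set (Fin 3 → ℚ)) : ℕ :=
  Module.finrank ℚ (Submodule.span ℚ C)

/-! The nine forms `ℓ k` and `x i` satisfy ten additive relations such as `ℓ 0 + x 1 = x 0`,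
and the sign vector of a point of the octant must respect each of them; a finite check shows
that only 43 sign vectors do, each realized by an explicit integer point. A nonempty cell is open
in the flat cut out by the forms vanishing on it, since a point of the cell can be perturbed in
any direction of that flat; so the cell spans the flat, whose dimension (3, 2 or 1) is read off
from the cross products of the vanishing normals. -/

open Filter Topology Module Submodule Matrix

section SignCell

variable {K V ι : Type*} [Field K] [AddCommGroup V] [Module K V]

def flat (f : ι → Dual K V) (x₀ : V) : Submodule K V :=
  ⨅ i, ⨅ (_ : f i x₀ = 0), LinearMap.ker (f i)

lemma mem_flat {f : ι → Dual K V} {x₀ v : V} : v ∈ flat f x₀ ↔ ∀ i, f i x₀ = 0 → f i v = 0 := by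
  simp [flat]

lemma flat_eq_top {f : ι → Dual K V} {x₀ : V} (h : ∀ i, f i x₀ ≠ 0) : flat f x₀ = ⊤ :=
  eq_top_iff.2 fun _ _ => mem_flat.2 fun i hi => absurd hi (h i)

variable [LinearOrder K]

def signCell (f : ι → Dual K V) (x₀ : V) : Set V :=
  {x | ∀ i, SignType.sign (f i x) = SignType.sign (f i x₀)}

variable {f : ι → Dual K V}

lemma signCell_subset_flat (x₀ : V) : signCell f x₀ ⊆ flat f x₀ := fun x hx =>
  mem_flat.2 fun i hi => by simpa [hi] using hx i

variable [IsStrictOrderedRing K] [TopologicalSpace K] [OrderTopology K] [Finite ι]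

lemma eventually_add_smul_mem_signCell {x₀ v : V} (hv : v ∈ flat f x₀) :
    ∀ᶠ ε in 𝓝[>] (0 : K), x₀ + ε • v ∈ signCell f x₀ := by
  simp only [signCell, Set.mem_ofPred_eq, eventually_all, map_add, map_smul, smul_eq_mul]
  intro i
  by_cases hi : f i x₀ = 0
  · simp [hi, mem_flat.1 hv i hi]
  · have hcont : ContinuousAt (fun ε : K => SignType.sign (f i x₀ + ε * f i v)) 0 :=
      (continuousAt_sign_of_ne_zero (by simpa using hi)).comp (by fun_prop)
    have := hcont.tendsto
    simp only [zero_mul, add_zero, nhds_discrete, tendsto_pure] at this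
    exact this.filter_mono nhdsWithin_le_nhds

theorem span_signCell (x₀ : V) : span K (signCell f x₀) = flat f x₀ := by
  refine le_antisymm (span_le.2 (signCell_subset_flat x₀)) fun v hv => ?_
  obtain ⟨ε, hε, hεpos⟩ := ((eventually_add_smul_mem_signCell hv).and self_mem_nhdsWithin).exists
  have hx₀ : x₀ ∈ signCell f x₀ := fun _ => rfl
  have : v = ε⁻¹ • ((x₀ + ε • v) - x₀) := by
    rw [add_sub_cancel_left, smul_smul, inv_mul_cancel₀ hεpos.ne', one_smul]
  rw [this]
  exact smul_mem _ _ (sub_mem (subset_span hε) (subset_span hx₀))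

end SignCell

section CrossProduct

variable {K ι : Type*} [Field K]

lemma mem_span_cross_of_dotProduct_eq_zero {u v x : Fin 3 → K} (huv : u ⨯₃ v ≠ 0)
    (hu : u ⬝ᵥ x = 0) (hv : v ⬝ᵥ x = 0) : x ∈ K ∙ (u ⨯₃ v) := by
  have hcross : (u ⨯₃ v) ⨯₃ x = 0 := by
    rw [← cross_anticomm, cross_cross_eq_smul_sub_smul', dotProduct_comm x v, hu, hv]
    simp
  have hdep : ¬LinearIndependent K ![u ⨯₃ v, x] := by
    rwa [← crossProduct_ne_zero_iff_linearIndependent, not_not]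
  rw [LinearIndependent.pair_iff' huv] at hdep
  exact mem_span_singleton.2 (not_forall_not.1 hdep)

lemma dotProduct_eq_zero_of_cross_eq_zero {u v x : Fin 3 → K} (hu : u ≠ 0) (huv : u ⨯₃ v = 0)
    (hx : u ⬝ᵥ x = 0) : v ⬝ᵥ x = 0 := by
  have hdep : ¬LinearIndependent K ![u, v] := by
    rwa [← crossProduct_ne_zero_iff_linearIndependent, not_not]
  rw [LinearIndependent.pair_iff' hu] at hdep
  obtain ⟨a, rfl⟩ := not_forall_not.1 hdep
  rw [smul_dotProduct, hx, smul_zero]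

def dotForms (N : ι → Fin 3 → K) (i : ι) : Dual K (Fin 3 → K) := dotProductEquiv K (Fin 3) (N i)

variable {N : ι → Fin 3 → K} {x₀ : Fin 3 → K}

lemma finrank_flat_dotForms_eq_one {i j : ι} (hi : N i ⬝ᵥ x₀ = 0) (hj : N j ⬝ᵥ x₀ = 0)
    (hij : N i ⨯₃ N j ≠ 0) (hx₀ : x₀ ≠ 0) : finrank K (flat (dotForms N) x₀) = 1 := by
  have hx₀_mem : x₀ ∈ flat (dotForms N) x₀ := mem_flat.2 fun _ h => h
  refine le_antisymm ?_ (one_le_finrank_iff.2 ((Submodule.ne_bot_iff _).2 ⟨x₀, hx₀_mem, hx₀⟩))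
  calc finrank K (flat (dotForms N) x₀)
      ≤ finrank K (K ∙ (N i ⨯₃ N j)) := finrank_mono fun x hx =>
        mem_span_cross_of_dotProduct_eq_zero hij (mem_flat.1 hx i hi) (mem_flat.1 hx j hj)
    _ = 1 := finrank_span_singleton hij

lemma finrank_flat_dotForms_eq_two {i : ι} (hNi : N i ≠ 0) (hi : N i ⬝ᵥ x₀ = 0)
    (hpar : ∀ j, N j ⬝ᵥ x₀ = 0 → N i ⨯₃ N j = 0) : finrank K (flat (dotForms N) x₀) = 2 := by
  have hflat : flat (dotForms N) x₀ = LinearMap.ker (dotForms N i) :=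
    le_antisymm (fun x hx => mem_flat.1 hx i hi) fun x hx =>
      mem_flat.2 fun j hj => dotProduct_eq_zero_of_cross_eq_zero hNi (hpar j hj) hx
  have hker := Dual.finrank_ker_add_one_of_ne_zero (f := dotForms N i)
    ((LinearEquiv.map_ne_zero_iff _).2 hNi)
  rw [hflat]
  simp only [finrank_fin_fun] at hker
  omega

end CrossProduct

section SumSign

variable {K : Type*} [Field K] [LinearOrder K] [IsStrictOrderedRing K]

def IsSumSign (s t r : SignType) : Prop := (s = t → r = s) ∧ (s = 0 → r = t) ∧ (t = 0 → r = s)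

instance (s t r : SignType) : Decidable (IsSumSign s t r) :=
  inferInstanceAs (Decidable (_ ∧ _ ∧ _))

lemma isSumSign_sign_add (u v : K) :
    IsSumSign (SignType.sign u) (SignType.sign v) (SignType.sign (u + v)) := by
  refine ⟨fun h => ?_, fun h => by simp [sign_eq_zero_iff.1 h],
    fun h => by simp [sign_eq_zero_iff.1 h]⟩
  rcases lt_trichotomy u 0 with hu | rfl | hu
  · rw [sign_neg hu] at h ⊢
    exact sign_neg (add_neg hu (sign_eq_neg_one_iff.1 h.symm))
  · simpa using h.symm
  · rw [sign_pos hu] at h ⊢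
    exact sign_pos (add_pos hu (sign_eq_one_iff.1 h.symm))

end SumSign

section IntCast

lemma intCast_comp_eq_zero {ι : Type*} {v : ι → ℤ} : (Int.cast ∘ v : ι → ℚ) = 0 ↔ v = 0 := by
  simp [funext_iff]

lemma intCast_dotProduct {ι : Type*} [Fintype ι] (u v : ι → ℤ) :
    (Int.cast ∘ u : ι → ℚ) ⬝ᵥ (Int.cast ∘ v) = ((u ⬝ᵥ v : ℤ) : ℚ) := by
  simp [dotProduct]

lemma intCast_cross (u v : Fin 3 → ℤ) :
    (Int.cast ∘ u : Fin 3 → ℚ) ⨯₃ (Int.cast ∘ v) = Int.cast ∘ (u ⨯₃ v) := by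
  ext i
  fin_cases i <;> simp [cross_apply]

end IntCast

section Octant

def normal : Fin 6 ⊕ Fin 3 → Fin 3 → ℤ :=
  Sum.elim ![![1, -1, 0], ![1, 0, -1], ![0, 1, -1], ![1, 1, -1], ![1, -1, 1], ![-1, 1, 1]]
    fun i => Pi.single i 1

def form : Fin 6 ⊕ Fin 3 → Dual ℚ (Fin 3 → ℚ) := dotForms fun e => Int.cast ∘ normal e

lemma form_inl (k : Fin 6) (x : Fin 3 → ℚ) : form (.inl k) x = ℓ k x := by
  fin_cases k <;> simp [form, dotForms, normal, ℓ, dotProduct, Fin.sum_univ_three] <;> ring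

lemma form_inr (i : Fin 3) (x : Fin 3 → ℚ) : form (.inr i) x = x i := by
  simp [form, dotForms, normal, dotProduct, Pi.single_apply, Function.comp_def]

lemma form_intCast (e : Fin 6 ⊕ Fin 3) (w : Fin 3 → ℤ) :
    form e (Int.cast ∘ w) = ((normal e ⬝ᵥ w : ℤ) : ℚ) :=
  intCast_dotProduct (normal e) w

lemma sgn_eq_sign (q : ℚ) : sgn q = SignType.sign q := by
  rcases lt_trichotomy q 0 with hq | rfl | hq
  · simp [sgn, hq]
  · simp [sgn]
  · simp [sgn, hq, hq.ne', not_lt_of_gt hq]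

lemma sgn_eq_sgn_iff {a b : ℚ} : sgn a = sgn b ↔ SignType.sign a = SignType.sign b := by
  rw [sgn_eq_sign, sgn_eq_sign]
  generalize SignType.sign a = s, SignType.sign b = t
  revert s t
  decide

lemma pattern_eq_pattern_iff {x y : Fin 3 → ℚ} :
    pattern x = pattern y ↔ ∀ e, SignType.sign (form e x) = SignType.sign (form e y) := by
  simp only [pattern, Prod.mk.injEq, funext_iff, Sum.forall, form_inl, form_inr, sgn_eq_sgn_iff]

lemma cell_eq_signCell {p : (Fin 6 → ℤ) × (Fin 3 → ℤ)} {x₀ : Fin 3 → ℚ} (hx₀ : x₀ ∈ cell p) :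
    cell p = signCell form x₀ := by
  obtain ⟨hnonneg, hne, rfl⟩ := hx₀
  ext x
  refine ⟨fun hx => pattern_eq_pattern_iff.1 hx.2.2, fun hx => ?_⟩
  have hsign i : SignType.sign (x i) = SignType.sign (x₀ i) := by simpa [form_inr] using hx (.inr i)
  refine ⟨fun i => sign_nonneg_iff.1 ((hsign i).symm ▸ sign_nonneg_iff.2 (hnonneg i)), ?_,
    pattern_eq_pattern_iff.2 hx⟩
  rintro rfl
  exact hne (funext fun i => by simpa using (hsign i).symm)

lemma dimOf_cell {p : (Fin 6 → ℤ) × (Fin 3 → ℤ)} {x₀ : Fin 3 → ℚ} (hx₀ : x₀ ∈ cell p) :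
    dimOf (cell p) = finrank ℚ (flat form x₀) := by
  rw [cell_eq_signCell hx₀, dimOf, span_signCell]

def witnesses : List (Fin 3 → ℤ) :=
  [![1, 2, 4], ![1, 4, 2], ![2, 1, 4], ![2, 4, 1], ![4, 1, 2], ![4, 2, 1],
   ![2, 3, 4], ![2, 4, 3], ![3, 2, 4], ![3, 4, 2], ![4, 2, 3], ![4, 3, 2],
   ![0, 1, 2], ![0, 2, 1], ![1, 0, 2], ![1, 2, 0], ![2, 0, 1], ![2, 1, 0],
   ![1, 1, 3], ![1, 3, 1], ![3, 1, 1], ![1, 2, 2], ![2, 1, 2], ![2, 2, 1],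
   ![1, 2, 3], ![1, 3, 2], ![2, 1, 3], ![2, 3, 1], ![3, 1, 2], ![3, 2, 1],
   ![2, 2, 3], ![2, 3, 2], ![3, 2, 2],
   ![1, 0, 0], ![0, 1, 0], ![0, 0, 1], ![0, 1, 1], ![1, 0, 1], ![1, 1, 0],
   ![1, 1, 1], ![1, 1, 2], ![1, 2, 1], ![2, 1, 1]]

/- `a, b, c` are the signs of the coordinates and `dₖ` that of `ℓ k`; each hypothesis
`IsSumSign s t r` stands for an identity `u + v = w` between forms with signs `s, t, r`. -/
set_option synthInstance.maxSize 2000 in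
set_option synthInstance.maxHeartbeats 200000 in
theorem exists_witness_of_isSumSign : ∀ a b c : SignType, 0 ≤ a → 0 ≤ b → 0 ≤ c →
    ¬(a = 0 ∧ b = 0 ∧ c = 0) →
    ∀ d₀, IsSumSign d₀ b a → ∀ d₁, IsSumSign d₁ c a →
    ∀ d₂, IsSumSign d₂ c b → IsSumSign d₀ d₂ d₁ →
    ∀ d₃, IsSumSign d₁ b d₃ → IsSumSign d₂ a d₃ →
    ∀ d₄, IsSumSign d₀ c d₄ → IsSumSign d₂ d₄ a →
    ∀ d₅, IsSumSign d₀ d₅ c → IsSumSign d₁ d₅ b →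
    ∃ w ∈ witnesses, ∀ e, (Sum.elim ![d₀, d₁, d₂, d₃, d₄, d₅] ![a, b, c] : _ → SignType) e =
      SignType.sign (normal e ⬝ᵥ w) := by
  decide +kernel

theorem exists_witness_pattern_eq {x : Fin 3 → ℚ} (hx : ∀ i, 0 ≤ x i) (hx₀ : x ≠ 0) :
    ∃ w ∈ witnesses, pattern x = pattern (Int.cast ∘ w) := by
  have rel {u v t : ℚ} (h : u + v = t) :
      IsSumSign (SignType.sign u) (SignType.sign v) (SignType.sign t) :=
    h ▸ isSumSign_sign_add u v
  have hne : ¬(SignType.sign (x 0) = 0 ∧ SignType.sign (x 1) = 0 ∧ SignType.sign (x 2) = 0) := by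
    rintro ⟨h0, h1, h2⟩
    refine hx₀ (funext fun i => ?_)
    fin_cases i
    exacts [sign_eq_zero_iff.1 h0, sign_eq_zero_iff.1 h1, sign_eq_zero_iff.1 h2]
  obtain ⟨h₀, h₁, h₂, h₃, h₄, h₅, h₆, h₇, h₈, h₉⟩ :
      ℓ 0 x + x 1 = x 0 ∧ ℓ 1 x + x 2 = x 0 ∧ ℓ 2 x + x 2 = x 1 ∧ ℓ 0 x + ℓ 2 x = ℓ 1 x ∧
      ℓ 1 x + x 1 = ℓ 3 x ∧ ℓ 2 x + x 0 = ℓ 3 x ∧ ℓ 0 x + x 2 = ℓ 4 x ∧ ℓ 2 x + ℓ 4 x = x 0 ∧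
      ℓ 0 x + ℓ 5 x = x 2 ∧ ℓ 1 x + ℓ 5 x = x 1 := by
    simp only [ℓ, Matrix.cons_val]
    refine ⟨?_, ?_, ?_, ?_, ?_, ?_, ?_, ?_, ?_, ?_⟩ <;> ring
  obtain ⟨w, hw, hsign⟩ := exists_witness_of_isSumSign _ _ _
    (sign_nonneg_iff.2 (hx 0)) (sign_nonneg_iff.2 (hx 1)) (sign_nonneg_iff.2 (hx 2)) hne
    _ (rel h₀) _ (rel h₁) _ (rel h₂) (rel h₃) _ (rel h₄) (rel h₅) _ (rel h₆) (rel h₇)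
    _ (rel h₈) (rel h₉)
  refine ⟨w, hw, pattern_eq_pattern_iff.2 fun e => ?_⟩
  rw [form_intCast, sign_intCast, ← hsign e]
  rcases e with k | i
  · fin_cases k <;> simp [form_inl]
  · fin_cases i <;> simp [form_inr]

lemma intCast_mem_cell {w : Fin 3 → ℤ} (hw : w ∈ witnesses) :
    (Int.cast ∘ w : Fin 3 → ℚ) ∈ cell (pattern (Int.cast ∘ w)) := by
  have hoct : ∀ w ∈ witnesses, (∀ i, 0 ≤ w i) ∧ w ≠ 0 := by decide
  refine ⟨fun i => Int.cast_nonneg ((hoct w hw).1 i), fun h => (hoct w hw).2 ?_, rfl⟩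
  exact funext fun i => Int.cast_injective (congrFun h i)

lemma injOn_pattern_intCast :
    Set.InjOn (fun w : Fin 3 → ℤ => pattern (Int.cast ∘ w)) {w | w ∈ witnesses} := by
  have hsep : ∀ w ∈ witnesses, ∀ w' ∈ witnesses,
      (∀ e, SignType.sign (normal e ⬝ᵥ w) = SignType.sign (normal e ⬝ᵥ w')) → w = w' := by
    decide +kernel
  intro w hw w' hw' h
  refine hsep w hw w' hw' fun e => ?_
  simpa [form_intCast] using pattern_eq_pattern_iff.1 h e

def flatDim (w : Fin 3 → ℤ) : ℕ :=
  if ∀ e, normal e ⬝ᵥ w ≠ 0 then 3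
  else if ∃ e e', normal e ⬝ᵥ w = 0 ∧ normal e' ⬝ᵥ w = 0 ∧ normal e ⨯₃ normal e' ≠ 0 then 1
  else 2

lemma finrank_flat_form_intCast {w : Fin 3 → ℤ} (hw : w ≠ 0) :
    finrank ℚ (flat form (Int.cast ∘ w)) = flatDim w := by
  unfold flatDim
  split_ifs with hchamber hray
  · rw [flat_eq_top fun e => by simpa [form_intCast] using hchamber e, finrank_top, finrank_fin_fun]
  · obtain ⟨e, e', he, he', hcross⟩ := hray
    refine finrank_flat_dotForms_eq_one (i := e) (j := e') ?_ ?_ ?_ (intCast_comp_eq_zero.not.2 hw)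
    · simp [intCast_dotProduct, he]
    · simp [intCast_dotProduct, he']
    · rwa [intCast_cross, Ne, intCast_comp_eq_zero]
  · push Not at hchamber hray
    obtain ⟨e, he⟩ := hchamber
    have hnormal : ∀ e, normal e ≠ 0 := by decide
    refine finrank_flat_dotForms_eq_two (i := e) (intCast_comp_eq_zero.not.2 (hnormal e))
      (by simp [intCast_dotProduct, he]) fun e' he' => ?_
    rw [intCast_cross, intCast_comp_eq_zero]
    exact hray e e' he (by simpa [intCast_dotProduct] using he')

lemma dimOf_cell_pattern_intCast {w : Fin 3 → ℤ} (hw : w ∈ witnesses) :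
    dimOf (cell (pattern (Int.cast ∘ w))) = flatDim w := by
  rw [dimOf_cell (intCast_mem_cell hw), finrank_flat_form_intCast]
  rintro rfl
  exact (intCast_mem_cell hw).2.1 (intCast_comp_eq_zero.2 rfl)

lemma setOf_cell_dimOf_eq (d : ℕ) :
    {p | (cell p).Nonempty ∧ dimOf (cell p) = d} =
      (fun w => pattern (Int.cast ∘ w)) '' {w | w ∈ witnesses ∧ flatDim w = d} := by
  ext p
  constructor
  · rintro ⟨⟨x, hx⟩, rfl⟩
    obtain ⟨w, hw, hpat⟩ := exists_witness_pattern_eq hx.1 hx.2.1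
    obtain rfl : p = pattern (Int.cast ∘ w) := hx.2.2.symm.trans hpat
    exact ⟨w, ⟨hw, (dimOf_cell_pattern_intCast hw).symm⟩, rfl⟩
  · rintro ⟨w, ⟨hw, rfl⟩, rfl⟩
    exact ⟨⟨_, intCast_mem_cell hw⟩, dimOf_cell_pattern_intCast hw⟩

lemma card_setOf_cell_dimOf_eq (d : ℕ) :
    Nat.card {p | (cell p).Nonempty ∧ dimOf (cell p) = d} =
      (witnesses.filter (flatDim · = d)).toFinset.card := by
  rw [setOf_cell_dimOf_eq, Nat.card_image_of_injOn (injOn_pattern_intCast.mono fun _ hw => hw.1),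
    Nat.card_coe_set_eq, ← Set.ncard_coe_finset]
  congr 1
  ext w
  simp

end Octant

/-- For the diagonal `SO₃`-action on `(ℂ³)³`: the subdivision of the octant
`Ω = {x ∈ ℚ³ : xᵢ ≥ 0}` by the six hyperplanes `x₁=x₂, x₁=x₃, x₂=x₃,
x₁+x₂=x₃, x₁+x₃=x₂, x₂+x₃=x₁` has exactly 12 three-dimensional cells,
21 two-dimensional cells and 10 one-dimensional cells (33 GIT-classes). -/
theorem stmt_10 :
    Nat.card {p : (Fin 6 → ℤ) × (Fin 3 → ℤ) | (cell p).Nonempty ∧ dimOf (cell p) = 3} = 12 ∧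
    Nat.card {p : (Fin 6 → ℤ) × (Fin 3 → ℤ) | (cell p).Nonempty ∧ dimOf (cell p) = 2} = 21 ∧
    Nat.card {p : (Fin 6 → ℤ) × (Fin 3 → ℤ) | (cell p).Nonempty ∧ dimOf (cell p) = 1} = 10 := by
  simp only [card_setOf_cell_dimOf_eq]
  decide +kernel

end Stmt10
end

section
/- Let I ⊊ {1,...,m_1} and J ⊊ {1,...,m_2} be nonempty subsets. The cone generated by the vectors e_i + f_j with (i ∈ I, j ∈ J) or (i ∉ I, j ∉ J) equals the intersection of the cone {(x,y) : x_i, y_j ≥ 0, Σ_i x_i = Σ_j y_j} with the hyperplane Σ_{i∈I} x_i = Σ_{j∈J} y_j. -/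
/-!
Colour `i` by whether `i ∈ I` and `j` by whether `j ∈ J`; the generators `eᵢ + fⱼ` are those
with equal colours. A nonnegative combination `∑ c (i, j) (eᵢ + fⱼ)` has marginals `x, y` which
carry the same mass on each colour class. Conversely, if nonnegative `x, y` have equal mass `s`
on every colour class, the product coupling `c (i, j) = xᵢ yⱼ / s` on each class realises them.
With two colours, equal masses on both classes means equal totals and `∑_I x = ∑_J y`.
-/

open Finset

section Coupling

variable {α β γ K : Type*} [Fintype α] [Fintype β] [DecidableEq γ]

lemma sum_smul_single_prod [Semiring K] [DecidableEq α] [DecidableEq β] (c : α × β → K) :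
    ∑ p : α × β, c p • ((Pi.single p.1 1 : α → K), (Pi.single p.2 1 : β → K)) =
      (fun i => ∑ j, c (i, j), fun j => ∑ i, c (i, j)) := by
  ext k
  · simp [Prod.fst_sum, Finset.sum_apply, Pi.single_apply, Fintype.sum_prod_type]
  · simp [Prod.snd_sum, Finset.sum_apply, Pi.single_apply, Fintype.sum_prod_type]

lemma sum_fiber_rowSum_eq_sum_fiber_colSum [AddCommMonoid K] {f : α → γ} {g : β → γ}
    {c : α × β → K} (hc : ∀ p, f p.1 ≠ g p.2 → c p = 0) (k : γ) :
    ∑ i with f i = k, ∑ j, c (i, j) = ∑ j with g j = k, ∑ i, c (i, j) :=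
  calc ∑ i with f i = k, ∑ j, c (i, j)
      = ∑ i with f i = k, ∑ j with g j = k, c (i, j) :=
        sum_congr rfl fun i hi => (sum_filter_of_ne fun j _ hne => by
          by_contra hj
          exact hne (hc (i, j) fun h => hj ((mem_filter.1 hi).2 ▸ h).symm)).symm
    _ = ∑ j with g j = k, ∑ i with f i = k, c (i, j) := sum_comm
    _ = ∑ j with g j = k, ∑ i, c (i, j) :=
        sum_congr rfl fun j hj => sum_filter_of_ne fun i _ hne => by
          by_contra hi
          exact hne (hc (i, j) fun h => hi (h.trans (mem_filter.1 hj).2))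

variable [Field K] [LinearOrder K] [IsStrictOrderedRing K]

lemma eq_zero_of_sum_fiber_eq_zero {f : α → γ} {x : α → K} (hx : ∀ i, 0 ≤ x i) {i : α}
    (h : ∑ i' with f i' = f i, x i' = 0) : x i = 0 :=
  le_antisymm (h ▸ single_le_sum (fun i' _ => hx i') (mem_filter.2 ⟨mem_univ i, rfl⟩)) (hx i)

-- On each colour class take the product coupling `x i * y j / s`, `s` the common mass of the
-- class; where `s = 0` the class carries no mass, so the junk value of `/ 0` is harmless.
lemma exists_supported_coupling_of_sum_fiber_eq {f : α → γ} {g : β → γ} {x : α → K} {y : β → K}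
    (hx : ∀ i, 0 ≤ x i) (hy : ∀ j, 0 ≤ y j)
    (hxy : ∀ k, ∑ i with f i = k, x i = ∑ j with g j = k, y j) :
    ∃ c : α × β → K, (∀ p, 0 ≤ c p) ∧ (∀ p, f p.1 ≠ g p.2 → c p = 0) ∧
      x = (fun i => ∑ j, c (i, j)) ∧ y = fun j => ∑ i, c (i, j) := by
  set s : γ → K := fun k => ∑ i with f i = k, x i
  have hs : ∀ k, 0 ≤ s k := fun k => sum_nonneg fun i _ => hx i
  refine ⟨fun p => if f p.1 = g p.2 then x p.1 * y p.2 / s (f p.1) else 0, ?_, ?_, ?_, ?_⟩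
  · intro p
    beta_reduce
    split_ifs
    · exact div_nonneg (mul_nonneg (hx _) (hy _)) (hs _)
    · exact le_rfl
  · intro p hp
    simp [hp]
  · funext i
    calc x i = x i * (∑ j with g j = f i, y j) / s (f i) := by
          rw [← hxy]; exact (mul_div_cancel_of_imp (eq_zero_of_sum_fiber_eq_zero hx)).symm
      _ = ∑ j with g j = f i, x i * y j / s (f i) := by rw [mul_sum, sum_div]
      _ = _ := by
          rw [sum_filter]
          exact sum_congr rfl fun j _ => by simp only [eq_comm]
  · funext j
    have hsj : s (g j) = 0 → y j = 0 := fun h =>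
      eq_zero_of_sum_fiber_eq_zero hy ((hxy _).symm.trans h)
    calc y j = s (g j) * y j / s (g j) := by rw [mul_comm, mul_div_cancel_of_imp hsj]
      _ = ∑ i with f i = g j, x i * y j / s (g j) := by rw [sum_mul, sum_div]
      _ = _ := by
          rw [sum_filter]
          refine sum_congr rfl fun i _ => ?_
          beta_reduce
          split_ifs with h
          · rw [h]
          · rfl

lemma exists_supported_coupling_iff {f : α → γ} {g : β → γ} {x : α → K} {y : β → K} :
    (∃ c : α × β → K, (∀ p, 0 ≤ c p) ∧ (∀ p, f p.1 ≠ g p.2 → c p = 0) ∧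
      x = (fun i => ∑ j, c (i, j)) ∧ y = fun j => ∑ i, c (i, j)) ↔
    (∀ i, 0 ≤ x i) ∧ (∀ j, 0 ≤ y j) ∧ ∀ k, ∑ i with f i = k, x i = ∑ j with g j = k, y j := by
  refine ⟨?_, fun ⟨hx, hy, hxy⟩ => exists_supported_coupling_of_sum_fiber_eq hx hy hxy⟩
  rintro ⟨c, hc₀, hc, rfl, rfl⟩
  exact ⟨fun i => sum_nonneg fun j _ => hc₀ _, fun j => sum_nonneg fun i _ => hc₀ _,
    sum_fiber_rowSum_eq_sum_fiber_colSum hc⟩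

end Coupling

lemma forall_bool_sum_fiber_decide_mem_eq_iff {α β K : Type*} [Fintype α] [Fintype β]
    [DecidableEq α] [DecidableEq β] [AddCommGroup K] (s : Finset α) (t : Finset β)
    (x : α → K) (y : β → K) :
    (∀ b : Bool, ∑ i with decide (i ∈ s) = b, x i = ∑ j with decide (j ∈ t) = b, y j) ↔
      ∑ i, x i = ∑ j, y j ∧ ∑ i ∈ s, x i = ∑ j ∈ t, y j := by
  simp only [Bool.forall_bool, decide_eq_false_iff_not, decide_eq_true_eq, filter_mem_eq_inter,
    univ_inter, ← sum_add_sum_compl s x, ← sum_add_sum_compl t y, ← compl_eq_univ_sdiff, filter_not]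
  constructor
  · rintro ⟨hc, h⟩
    exact ⟨by rw [h, hc], h⟩
  · rintro ⟨h', h⟩
    exact ⟨add_left_cancel (h ▸ h'), h⟩

theorem stmt_14_general {m₁ m₂ : ℕ} (I : Finset (Fin m₁)) (J : Finset (Fin m₂)) :
    {xy : (Fin m₁ → ℚ) × (Fin m₂ → ℚ) | ∃ c : Fin m₁ × Fin m₂ → ℚ,
        (∀ p, 0 ≤ c p) ∧
        (∀ p : Fin m₁ × Fin m₂, ¬((p.1 ∈ I ∧ p.2 ∈ J) ∨ (p.1 ∉ I ∧ p.2 ∉ J)) → c p = 0) ∧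
        xy = ∑ p : Fin m₁ × Fin m₂, c p • (((Pi.single p.1 1 : Fin m₁ → ℚ), (Pi.single p.2 1 : Fin m₂ → ℚ)))} =
    {xy : (Fin m₁ → ℚ) × (Fin m₂ → ℚ) | (∀ i, 0 ≤ xy.1 i) ∧ (∀ j, 0 ≤ xy.2 j) ∧
        (∑ i, xy.1 i = ∑ j, xy.2 j) ∧ (∑ i ∈ I, xy.1 i = ∑ j ∈ J, xy.2 j)} := by
  ext ⟨x, y⟩
  have hsupp : ∀ p : Fin m₁ × Fin m₂, ¬((p.1 ∈ I ∧ p.2 ∈ J) ∨ (p.1 ∉ I ∧ p.2 ∉ J)) ↔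
      decide (p.1 ∈ I) ≠ decide (p.2 ∈ J) := fun p => by
    by_cases p.1 ∈ I <;> by_cases p.2 ∈ J <;> simp [*]
  simp only [Set.mem_ofPred_eq, sum_smul_single_prod, Prod.mk.injEq, hsupp]
  exact exists_supported_coupling_iff.trans <| and_congr_right' <| and_congr_right' <|
    forall_bool_sum_fiber_decide_mem_eq_iff I J x y

/-- Orbit cones for `SL(V)` acting on `ℙ(V)^{m₁} × ℙ(V*)^{m₂}` with `m₁, m₂ < n`
(Theorem 4): for nonempty proper subsets `I ⊊ {1,...,m₁}` and `J ⊊ {1,...,m₂}`,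
the cone generated by the vectors `eᵢ + fⱼ` with (`i ∈ I, j ∈ J`) or
(`i ∉ I, j ∉ J`) equals the intersection of the weight cone
`{(x,y) : xᵢ, yⱼ ≥ 0, ∑ xᵢ = ∑ yⱼ}` with the hyperplane `∑_{i∈I} xᵢ = ∑_{j∈J} yⱼ`. -/
theorem stmt_14 {m₁ m₂ : ℕ} (I : Finset (Fin m₁)) (J : Finset (Fin m₂))
    (hI : I.Nonempty) (hI' : I ≠ Finset.univ)
    (hJ : J.Nonempty) (hJ' : J ≠ Finset.univ) :
    {xy : (Fin m₁ → ℚ) × (Fin m₂ → ℚ) | ∃ c : Fin m₁ × Fin m₂ → ℚ,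
        (∀ p, 0 ≤ c p) ∧
        (∀ p : Fin m₁ × Fin m₂, ¬((p.1 ∈ I ∧ p.2 ∈ J) ∨ (p.1 ∉ I ∧ p.2 ∉ J)) → c p = 0) ∧
        xy = ∑ p : Fin m₁ × Fin m₂, c p • (((Pi.single p.1 1 : Fin m₁ → ℚ), (Pi.single p.2 1 : Fin m₂ → ℚ)))} =
    {xy : (Fin m₁ → ℚ) × (Fin m₂ → ℚ) | (∀ i, 0 ≤ xy.1 i) ∧ (∀ j, 0 ≤ xy.2 j) ∧
        (∑ i, xy.1 i = ∑ j, xy.2 j) ∧ (∑ i ∈ I, xy.1 i = ∑ j ∈ J, xy.2 j)} :=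
  stmt_14_general I J
end
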